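/- Let M be infinite, let ℱ be a right Følner net in the right amenable cell space 𝓡, let X be a strongly irreducible subshift of Q^M of finite type, let Y be a subshift of Q^M, and let Δ be a local map from X to Y that is not pre-injective. Then Ent_ℱ(Δ(X)) < Ent_ℱ(X). -/

import Mathlib

open Filter Set

namespace GoE

variable {G M Q : Type*}

/-- A left homogeneous space `⟨M, G, ▷⟩` together with a coordinate system
`⟨m₀, (g_{m₀,m})_{m∈M}⟩`: a cell space with finite stabiliser `G₀` of `m₀`. -/
structure CellSpace (G M : Type*) [Group G] where
  act : G → M → M
  one_act : ∀ m : M, act 1 m = m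
  mul_act : ∀ (g h : G) (m : M), act (g * h) m = act g (act h m)
  transitive : ∀ m m' : M, ∃ g : G, act g m = m'
  m0 : M
  coord : M → G
  coord_act : ∀ m : M, act (coord m) m0 = m
  stab_finite : {g : G | act g m0 = m0}.Finite

variable [Group G]

namespace CellSpace

/-- Membership in the stabiliser `G₀` of `m₀`. -/
def stab (R : CellSpace G M) (g : G) : Prop := R.act g R.m0 = R.m0

/-- The induced right semi-action `m ↝ gG₀ = g_{m₀,m} g ▷ m₀`, on representatives. -/
def sAct (R : CellSpace G M) (m : M) (g : G) : M := R.act (R.coord m * g) R.m0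

/-- `m ↝ ι n` where `ι : M → G/G₀`, `n ↦ G_{m₀,n}` is the canonical identification. -/
def nAct (R : CellSpace G M) (m n : M) : M := R.act (R.coord m * R.coord n) R.m0

/-- `S ⊆ G` represents a finite symmetric right generating set of cosets
(`G₀ · S ⊆ S`, `S⁻¹ ⊆ S`, and `S` generates). -/
structure IsRightGenSet (R : CellSpace G M) (S : Set G) : Prop where
  finite : S.Finite
  saturated : ∀ s ∈ S, ∀ g₀ : G, R.stab g₀ → s * g₀ ∈ S
  stab_mul : ∀ g₀ : G, R.stab g₀ → ∀ s ∈ S, g₀ * s ∈ S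
  symm : ∀ s ∈ S, s⁻¹ ∈ S
  generates : ∀ m : M, ∃ (k : ℕ) (f : ℕ → M), f 0 = R.m0 ∧ f k = m ∧
    ∀ i < k, ∃ s ∈ S, f (i + 1) = R.sAct (f i) s

/-- There is an `S`-path of length `n` from `m` to `m'` in the `S`-Cayley graph. -/
def Chain (R : CellSpace G M) (S : Set G) (m m' : M) (n : ℕ) : Prop :=
  ∃ f : ℕ → M, f 0 = m ∧ f n = m' ∧ ∀ i < n, ∃ s ∈ S, f (i + 1) = R.sAct (f i) s

/-- The `S`-metric `d`. -/
noncomputable def dist (R : CellSpace G M) (S : Set G) (m m' : M) : ℕ :=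
  sInf {n : ℕ | R.Chain S m m' n}

/-- The ball `B(m, ρ)` of radius `ρ` centred at `m`. -/
noncomputable def ball (R : CellSpace G M) (S : Set G) (m : M) (ρ : ℕ) : Set M :=
  {m' : M | R.dist S m m' ≤ ρ}

/-- The `θ`-interior `A^{-θ}` of `A`. -/
noncomputable def inter (R : CellSpace G M) (S : Set G) (A : Set M) (θ : ℕ) : Set M :=
  {m ∈ A | R.ball S m θ ⊆ A}

/-- The `θ`-closure `A^{+θ}` of `A`. -/
noncomputable def clos (R : CellSpace G M) (S : Set G) (A : Set M) (θ : ℕ) : Set M :=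
  {m : M | (R.ball S m θ ∩ A).Nonempty}

/-- The external `θ`-boundary `∂θ⁺A = A^{+θ} ∖ A`. -/
noncomputable def extB (R : CellSpace G M) (S : Set G) (A : Set M) (θ : ℕ) : Set M :=
  R.clos S A θ \ A

/-- The internal `θ`-boundary `∂θ⁻A = A ∖ A^{-θ}`. -/
noncomputable def intB (R : CellSpace G M) (S : Set G) (A : Set M) (θ : ℕ) : Set M :=
  A \ R.inter S A θ

/-- The `θ`-boundary `∂θA = A^{+θ} ∖ A^{-θ}`. -/
noncomputable def bdry (R : CellSpace G M) (S : Set G) (A : Set M) (θ : ℕ) : Set M :=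
  R.clos S A θ \ R.inter S A θ

end CellSpace

/-- The set `X_A` of restrictions to `A` of the elements of `X`. -/
def restr (A : Set M) (X : Set (M → Q)) : Set (A → Q) :=
  (fun x : M → Q => A.restrict x) '' X

/-- The pattern `p` (with domain `A`) semi-occurs in the configuration `c`:
there is `h ∈ H` with `h ⊛ p = c↾_{h ▷ dom p}`. -/
def SemiOccurs (R : CellSpace G M) (H : Subgroup G) {A : Set M} (p : A → Q)
    (c : M → Q) : Prop :=
  ∃ h ∈ H, ∀ a : A, c (R.act h ↑a) = p a

/-- The pattern `p` (with domain `A`) occurs at `t` in the configuration `c`: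
`t ⊛' p = c↾_{t ↝ A}`. -/
def OccursAt (R : CellSpace G M) {A : Set M} (p : A → Q) (t : M) (c : M → Q) : Prop :=
  ∀ a : A, c (R.nAct t ↑a) = p a

/-- The pattern `p` is allowed in `X`: it semi-occurs in some point of `X`. -/
def Allowed (R : CellSpace G M) (H : Subgroup G) (X : Set (M → Q)) {A : Set M}
    (p : A → Q) : Prop :=
  ∃ x ∈ X, SemiOccurs R H p x

/-- The set `⟨𝔉⟩` generated by a set `𝔉` of forbidden patterns. -/
def Generated (R : CellSpace G M) (H : Subgroup G) (𝔉 : Set (Σ A : Set M, A → Q)) :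
    Set (M → Q) :=
  {c : M → Q | ∀ f ∈ 𝔉, ¬ SemiOccurs R H f.2 c}

/-- `X` is a subshift of `Q^M`: it is generated by a set of blocks. -/
def IsSubshift (R : CellSpace G M) (H : Subgroup G) (X : Set (M → Q)) : Prop :=
  ∃ 𝔉 : Set (Σ A : Set M, A → Q), (∀ f ∈ 𝔉, f.1.Finite) ∧ X = Generated R H 𝔉

/-- `X` is a subshift of finite type: it is generated by a finite set of blocks. -/
def IsSubshiftFT (R : CellSpace G M) (H : Subgroup G) (X : Set (M → Q)) : Prop :=
  ∃ 𝔉 : Set (Σ A : Set M, A → Q), 𝔉.Finite ∧ (∀ f ∈ 𝔉, f.1.Finite) ∧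
    X = Generated R H 𝔉

/-- `X` is a `κ`-step subshift: it is generated by a set of `B(κ)`-blocks. -/
def IsStep (R : CellSpace G M) (S : Set G) (H : Subgroup G) (X : Set (M → Q))
    (κ : ℕ) : Prop :=
  ∃ 𝔉 : Set (Σ A : Set M, A → Q), (∀ f ∈ 𝔉, f.1 = R.ball S R.m0 κ) ∧
    X = Generated R H 𝔉

/-- `X` is `κ`-strongly irreducible. -/
def IsStronglyIrr (R : CellSpace G M) (S : Set G) (H : Subgroup G)
    (X : Set (M → Q)) (κ : ℕ) : Prop :=
  ∀ (A B : Set M), A.Finite → B.Finite → ∀ (p : A → Q) (p' : B → Q),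
    Allowed R H X p → Allowed R H X p' →
    (∀ a ∈ A, ∀ b ∈ B, κ + 1 ≤ R.dist S a b) →
    ∃ x ∈ X, A.restrict x = p ∧ B.restrict x = p'

/-- `X` has `ρ`-bounded propagation. -/
def HasBoundedProp (R : CellSpace G M) (S : Set G) (X : Set (M → Q)) (ρ : ℕ) : Prop :=
  ∀ F : Set M, F.Finite → ∀ p : F → Q,
    (∀ f ∈ F, ∃ x ∈ X, ∀ (m : M) (hm : m ∈ R.ball S f ρ ∩ F), p ⟨m, hm.2⟩ = x m) →
    ∃ x ∈ X, F.restrict x = p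

/-- `Δ` is a `κ`-local map from `X` to `Y`. -/
def IsLocalMap (R : CellSpace G M) (S : Set G) (H : Subgroup G)
    (X Y : Set (M → Q)) (Δ : (M → Q) → (M → Q)) (κ : ℕ) : Prop :=
  Set.MapsTo Δ X Y ∧
  ∃ N : Set M, N ⊆ R.ball S R.m0 κ ∧
    (∀ g₀ : G, R.stab g₀ → ∀ n ∈ N, R.act g₀ n ∈ N) ∧
    ∃ δ : (N → Q) → Q,
      (∀ h₀ ∈ H, R.stab h₀ →
        ∀ ℓ ∈ restr N X, ∀ ℓ' : N → Q,
          (∀ (n : M) (hn : n ∈ N) (hn' : R.act h₀⁻¹ n ∈ N),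
            ℓ' ⟨n, hn⟩ = ℓ ⟨R.act h₀⁻¹ n, hn'⟩) →
          δ ℓ' = δ ℓ) ∧
      ∀ x ∈ X, ∀ m : M, Δ x m = δ (fun n : N => x (R.nAct m ↑n))

/-- `Δ` is pre-injective on `X`. -/
def PreInjective (X : Set (M → Q)) (Δ : (M → Q) → (M → Q)) : Prop :=
  ∀ x ∈ X, ∀ x' ∈ X, Δ x = Δ x' → {m : M | x m ≠ x' m}.Finite → x = x'

/-- The cell space `R` is right amenable: there is a finitely additive probability
measure on the power set of `M` that is semi-invariant under the right semi-action. -/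
def RightAmenable (R : CellSpace G M) : Prop :=
  ∃ μ : Set M → ℝ, (∀ A : Set M, 0 ≤ μ A) ∧ μ Set.univ = 1 ∧
    (∀ A B : Set M, Disjoint A B → μ (A ∪ B) = μ A + μ B) ∧
    ∀ (g : G) (A : Set M), Set.InjOn (fun m => R.sAct m g) A →
      μ ((fun m => R.sAct m g) '' A) = μ A

/-- `F` is a right Følner net in `R` (indexed by the directed set `I`). -/
def IsFolnerNet (R : CellSpace G M) (S : Set G) {I : Type*} [Preorder I]
    (F : I → Set M) : Prop :=
  (∀ i, (F i).Nonempty) ∧ (∀ i, (F i).Finite) ∧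
  ∀ ρ : ℕ, Tendsto (fun i => ((R.bdry S (F i) ρ).ncard : ℝ) / ((F i).ncard : ℝ))
    atTop (nhds 0)

/-- The entropy of `X ⊆ Q^M` with respect to the net `F`:
`limsup_i log|X_{F_i}| / |F_i|`. -/
noncomputable def entropy (R : CellSpace G M) (S : Set G) {I : Type*} [Preorder I]
    (F : I → Set M) (X : Set (M → Q)) : ℝ :=
  limsup (fun i => Real.log ((restr (F i) X).ncard : ℝ) / ((F i).ncard : ℝ)) atTop

/-- `T` is a `⟨θ, κ, θ'⟩`-tiling of `R`. -/
def IsTiling (R : CellSpace G M) (S : Set G) (θ κ θ' : ℕ) (T : Set M) : Prop :=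
  (∀ t ∈ T, ∀ t' ∈ T, t ≠ t' →
    ∀ a ∈ R.ball S t θ, ∀ b ∈ R.ball S t' θ, κ + 1 ≤ R.dist S a b) ∧
  ∀ m : M, ∃ t ∈ T, m ∈ R.ball S t θ'

/-- The action `h ⊛ c` of `h ∈ G` on configurations: `(h ⊛ c)(m) = c(h⁻¹ ▷ m)`. -/
def shiftAct (R : CellSpace G M) (h : G) (c : M → Q) : M → Q :=
  fun m => c (R.act h⁻¹ m)

/-!
Non-pre-injectivity provides `x₁ ≠ x₂` in `X` with `Δ x₁ = Δ x₂` that differ only inside a ball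
`B(m₀, θ₀)`. Fix a tiling `T` whose `θ`-balls are far apart. Replacing the translate of `x₁` by
that of `x₂` around every tile where it shows up does not change the image under the local map
`Δ`, so `Δ(X) = Δ(Z)` for the set `Z` of points of `X` that show the `x₁`-pattern on no tile.
Strong irreducibility, on the other hand, reinserts that pattern independently on any set of
tiles inside a finite `F`, so `|X_F| ≥ |Z_F| (1 + q^{-V})^{#tiles in F}` with `q = |Q|` and `V`
the size of a slightly enlarged tile, while locality gives `|Δ(Z)_F| ≤ |Z_F| q^{|∂F|}`. For a
Følner set `F` the tiles inside `F` number at least a fixed fraction of `|F|` and the boundary is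
negligible, which yields the entropy gap.
-/

section Development

variable {R : CellSpace G M} {S : Set G} {H : Subgroup G} {X Y Z : Set (M → Q)}
  {Δ : (M → Q) → (M → Q)} {κ κX κΔ θ₀ θ θ' : ℕ} {T F : Set M}

namespace CellSpace

lemma act_inv_act (R : CellSpace G M) (g : G) (m : M) : R.act g⁻¹ (R.act g m) = m := by
  rw [← R.mul_act, inv_mul_cancel, R.one_act]

lemma act_act_inv (R : CellSpace G M) (g : G) (m : M) : R.act g (R.act g⁻¹ m) = m := by
  rw [← R.mul_act, mul_inv_cancel, R.one_act]

lemma act_injective (R : CellSpace G M) (g : G) : Function.Injective (R.act g) :=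
  Function.LeftInverse.injective (R.act_inv_act g)

lemma act_coord_inv (R : CellSpace G M) (m : M) : R.act (R.coord m)⁻¹ m = R.m0 := by
  simpa only [R.coord_act] using R.act_inv_act (R.coord m) R.m0

lemma stab_inv {g : G} (h : R.stab g) : R.stab g⁻¹ := by
  unfold stab at h ⊢
  conv_lhs => rw [← h]
  rw [R.act_inv_act]

lemma nAct_eq (R : CellSpace G M) (m n : M) : R.nAct m n = R.act (R.coord m) n := by
  rw [nAct, R.mul_act, R.coord_act]

lemma chain_zero (m : M) : R.Chain S m m 0 :=
  ⟨fun _ => m, rfl, rfl, fun _ hi => absurd hi (Nat.not_lt_zero _)⟩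

lemma Chain.split {m m' : M} {n : ℕ} (h : R.Chain S m m' n) {i : ℕ} (hi : i ≤ n) :
    ∃ mi : M, R.Chain S m mi i ∧ R.Chain S mi m' (n - i) := by
  obtain ⟨f, hf0, hfn, hf⟩ := h
  refine ⟨f i, ⟨f, hf0, rfl, fun j hj => hf j (by omega)⟩,
    ⟨fun j => f (i + j), rfl, by simp only [Nat.add_sub_cancel' hi, hfn], fun j hj => ?_⟩⟩
  simpa only [Nat.add_assoc] using hf (i + j) (by omega)

lemma Chain.trans {m m' m'' : M} {a b : ℕ} (h₁ : R.Chain S m m' a)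
    (h₂ : R.Chain S m' m'' b) : R.Chain S m m'' (a + b) := by
  obtain ⟨f, hf0, hfa, hf⟩ := h₁
  obtain ⟨g, hg0, hgb, hg⟩ := h₂
  set k : ℕ → M := fun j => if j ≤ a then f j else g (j - a)
  have hkf : ∀ j ≤ a, k j = f j := fun j hj => if_pos hj
  have hkg : ∀ j, a ≤ j → k j = g (j - a) := by
    intro j hj
    rcases hj.eq_or_lt with rfl | hlt
    · rw [hkf _ le_rfl, hfa, Nat.sub_self, hg0]
    · exact if_neg (Nat.not_le.mpr hlt)
  refine ⟨k, by rw [hkf 0 (Nat.zero_le a), hf0], ?_, fun i hi => ?_⟩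
  · rw [hkg _ (Nat.le_add_right a b), Nat.add_sub_cancel_left, hgb]
  · rcases Nat.lt_or_ge i a with hia | hia
    · rw [hkf _ hia, hkf _ hia.le]
      exact hf i hia
    · rw [hkg _ hia, hkg (i + 1) (by omega), Nat.sub_add_comm hia]
      exact hg (i - a) (by omega)

lemma exists_mem_eq_sAct_of_eq_sAct (hS : R.IsRightGenSet S) {m m' : M} {s : G}
    (hs : s ∈ S) (h : m' = R.sAct m s) : ∃ s' ∈ S, m = R.sAct m' s' := by
  have hstab : R.stab ((R.coord m')⁻¹ * (R.coord m * s)) := by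
    rw [stab, R.mul_act, ← sAct, ← h, act_coord_inv]
  refine ⟨(R.coord m')⁻¹ * (R.coord m * s) * s⁻¹,
    hS.stab_mul _ hstab s⁻¹ (hS.symm s hs), ?_⟩
  rw [sAct, show R.coord m' * ((R.coord m')⁻¹ * (R.coord m * s) * s⁻¹) = R.coord m by group,
    R.coord_act]

lemma Chain.symm (hS : R.IsRightGenSet S) {m m' : M} {n : ℕ} (h : R.Chain S m m' n) :
    R.Chain S m' m n := by
  obtain ⟨f, hf0, hfn, hf⟩ := h
  refine ⟨fun i => f (n - i), by simp [hfn], by simp [hf0], fun i hi => ?_⟩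
  obtain ⟨s, hs, hstep⟩ := hf (n - (i + 1)) (by omega)
  rw [show n - (i + 1) + 1 = n - i by omega] at hstep
  exact exists_mem_eq_sAct_of_eq_sAct hS hs hstep

lemma exists_chain (hS : R.IsRightGenSet S) (m m' : M) : ∃ n, R.Chain S m m' n := by
  obtain ⟨k, f, hf⟩ := hS.generates m
  obtain ⟨k', f', hf'⟩ := hS.generates m'
  exact ⟨k + k', (Chain.symm hS ⟨f, hf⟩).trans ⟨f', hf'⟩⟩

lemma chain_dist (hS : R.IsRightGenSet S) (m m' : M) : R.Chain S m m' (R.dist S m m') :=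
  Nat.sInf_mem (exists_chain hS m m')

lemma dist_le {m m' : M} {n : ℕ} (h : R.Chain S m m' n) : R.dist S m m' ≤ n :=
  Nat.sInf_le h

lemma dist_self (m : M) : R.dist S m m = 0 :=
  Nat.le_zero.mp (dist_le (chain_zero m))

lemma eq_of_dist_eq_zero (hS : R.IsRightGenSet S) {m m' : M} (h : R.dist S m m' = 0) :
    m = m' := by
  obtain ⟨f, hf0, hfn, -⟩ := h ▸ chain_dist hS m m'
  rw [← hf0, hfn]

lemma dist_triangle (hS : R.IsRightGenSet S) (m m' m'' : M) :
    R.dist S m m'' ≤ R.dist S m m' + R.dist S m' m'' :=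
  dist_le ((chain_dist hS m m').trans (chain_dist hS m' m''))

lemma dist_comm (hS : R.IsRightGenSet S) (m m' : M) : R.dist S m m' = R.dist S m' m :=
  le_antisymm (dist_le ((chain_dist hS m' m).symm hS))
    (dist_le ((chain_dist hS m m').symm hS))

lemma exists_mem_act_sAct_eq (hS : R.IsRightGenSet S) {s : G} (hs : s ∈ S) (g : G)
    (m : M) : ∃ s' ∈ S, R.act g (R.sAct m s) = R.sAct (R.act g m) s' := by
  have hstab : R.stab ((R.coord (R.act g m))⁻¹ * (g * R.coord m)) := by
    rw [stab, R.mul_act, R.mul_act, R.coord_act, act_coord_inv]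
  refine ⟨(R.coord (R.act g m))⁻¹ * (g * R.coord m) * s, hS.stab_mul _ hstab s hs, ?_⟩
  rw [sAct, sAct, ← R.mul_act]
  congr 1
  group

lemma Chain.act (hS : R.IsRightGenSet S) (g : G) {m m' : M} {n : ℕ}
    (h : R.Chain S m m' n) : R.Chain S (R.act g m) (R.act g m') n := by
  obtain ⟨f, hf0, hfn, hf⟩ := h
  refine ⟨fun i => R.act g (f i), by simp only [hf0], by simp only [hfn], fun i hi => ?_⟩
  obtain ⟨s, hs, hstep⟩ := hf i hi
  simpa only [hstep] using exists_mem_act_sAct_eq hS hs g (f i)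

lemma dist_act (hS : R.IsRightGenSet S) (g : G) (m m' : M) :
    R.dist S (R.act g m) (R.act g m') = R.dist S m m' := by
  refine le_antisymm (dist_le ((chain_dist hS m m').act hS g)) ?_
  simpa only [act_inv_act] using
    dist_le ((chain_dist hS (R.act g m) (R.act g m')).act hS g⁻¹)

lemma mem_ball {m m' : M} {ρ : ℕ} : m' ∈ R.ball S m ρ ↔ R.dist S m m' ≤ ρ := Iff.rfl

lemma mem_ball_comm (hS : R.IsRightGenSet S) {m m' : M} {ρ : ℕ} :
    m' ∈ R.ball S m ρ ↔ m ∈ R.ball S m' ρ := by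
  rw [mem_ball, mem_ball, dist_comm hS]

lemma mem_ball_self (m : M) (ρ : ℕ) : m ∈ R.ball S m ρ := by
  rw [mem_ball, dist_self]
  exact Nat.zero_le ρ

lemma ball_mono {m : M} {ρ ρ' : ℕ} (h : ρ ≤ ρ') : R.ball S m ρ ⊆ R.ball S m ρ' :=
  fun _ hm => le_trans hm h

lemma ball_subset_ball (hS : R.IsRightGenSet S) {m m' : M} {a b : ℕ}
    (h : R.dist S m m' ≤ a) : R.ball S m' b ⊆ R.ball S m (a + b) :=
  fun x hx => (dist_triangle hS m m' x).trans (Nat.add_le_add h hx)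

lemma act_mem_ball_iff (hS : R.IsRightGenSet S) (g : G) {m m' : M} {ρ : ℕ} :
    R.act g m' ∈ R.ball S (R.act g m) ρ ↔ m' ∈ R.ball S m ρ := by
  rw [mem_ball, mem_ball, dist_act hS]

lemma act_coord_mem_ball (hS : R.IsRightGenSet S) {t m : M} {ρ : ℕ}
    (hm : m ∈ R.ball S R.m0 ρ) : R.act (R.coord t) m ∈ R.ball S t ρ := by
  have h := (act_mem_ball_iff hS (R.coord t)).2 hm
  rwa [R.coord_act] at h

lemma nAct_mem_ball (hS : R.IsRightGenSet S) {n : M} {ρ : ℕ}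
    (hn : n ∈ R.ball S R.m0 ρ) (m : M) : R.nAct m n ∈ R.ball S m ρ :=
  R.nAct_eq m n ▸ act_coord_mem_ball hS hn

lemma image_act_ball (hS : R.IsRightGenSet S) (g : G) (m : M) (ρ : ℕ) :
    R.act g '' R.ball S m ρ = R.ball S (R.act g m) ρ := by
  ext x
  refine ⟨?_, fun hx => ⟨R.act g⁻¹ x, ?_, R.act_act_inv g x⟩⟩
  · rintro ⟨y, hy, rfl⟩
    exact (act_mem_ball_iff hS g).2 hy
  · rwa [← act_mem_ball_iff hS g, R.act_act_inv]

lemma ball_succ_subset (hS : R.IsRightGenSet S) (m : M) (ρ : ℕ) :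
    R.ball S m (ρ + 1) ⊆ R.ball S m ρ ∪ ⋃ m' ∈ R.ball S m ρ, (R.sAct m') '' S := by
  intro x hx
  rcases Nat.lt_or_ge (R.dist S m x) (ρ + 1) with h | h
  · exact Or.inl (Nat.lt_succ_iff.mp h)
  · obtain ⟨mi, h₁, f, hf0, hfn, hf⟩ :=
      (le_antisymm hx h ▸ chain_dist hS m x).split (Nat.le_succ ρ)
    obtain ⟨s, hs, hstep⟩ := hf 0 (by omega)
    refine Or.inr (Set.mem_biUnion (dist_le h₁) ⟨s, hs, ?_⟩)
    rw [← hf0, ← hstep, ← hfn, Nat.add_sub_cancel_left]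

lemma finite_ball (hS : R.IsRightGenSet S) (m : M) (ρ : ℕ) : (R.ball S m ρ).Finite := by
  induction ρ with
  | zero =>
    refine (Set.finite_singleton m).subset fun x hx => ?_
    exact (eq_of_dist_eq_zero hS (Nat.le_zero.mp hx)).symm
  | succ ρ ih =>
    exact (ih.union (ih.biUnion fun _ _ => hS.finite.image _)).subset
      (ball_succ_subset hS m ρ)

lemma ncard_ball (hS : R.IsRightGenSet S) (m : M) (ρ : ℕ) :
    (R.ball S m ρ).ncard = (R.ball S R.m0 ρ).ncard := by
  conv_lhs => rw [← R.coord_act m, ← image_act_ball hS]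
  exact Set.ncard_image_of_injective _ (R.act_injective _)

lemma ncard_ball_pos (hS : R.IsRightGenSet S) (m : M) (ρ : ℕ) : 0 < (R.ball S m ρ).ncard :=
  (Set.ncard_pos (finite_ball hS m ρ)).2 ⟨m, mem_ball_self m ρ⟩

lemma exists_subset_ball {A : Set M} (hA : A.Finite) (m : M) :
    ∃ ρ, A ⊆ R.ball S m ρ :=
  ⟨hA.toFinset.sup (R.dist S m), fun _ ha =>
    Finset.le_sup (f := R.dist S m) (hA.mem_toFinset.mpr ha)⟩

lemma subset_clos (F : Set M) (ρ : ℕ) : F ⊆ R.clos S F ρ :=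
  fun m hm => ⟨m, mem_ball_self m ρ, hm⟩

lemma finite_clos (hS : R.IsRightGenSet S) (hF : F.Finite) (ρ : ℕ) :
    (R.clos S F ρ).Finite := by
  refine (hF.biUnion fun m _ => finite_ball hS m ρ).subset ?_
  rintro m' ⟨m, hm', hm⟩
  exact Set.mem_biUnion hm ((mem_ball_comm hS).1 hm')

end CellSpace

def IsShiftInvariant (R : CellSpace G M) (H : Subgroup G) (X : Set (M → Q)) : Prop :=
  ∀ h ∈ H, ∀ x ∈ X, shiftAct R h x ∈ X

def IsBallDetermined (R : CellSpace G M) (S : Set G) (X : Set (M → Q)) (κ : ℕ) : Prop :=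
  ∀ w : M → Q, (∀ m, ∃ x ∈ X, Set.EqOn w x (R.ball S m κ)) → w ∈ X

lemma shiftAct_act (R : CellSpace G M) (h : G) (c : M → Q) (m : M) :
    shiftAct R h c (R.act h m) = c m := by
  rw [shiftAct, R.act_inv_act]

lemma shiftAct_ne_shiftAct {x₁ x₂ : M → Q} (h : x₁ ≠ x₂) (g : G) :
    shiftAct R g x₁ ≠ shiftAct R g x₂ := by
  intro heq
  exact h (funext fun m => by simpa only [shiftAct_act] using congrFun heq (R.act g m))

lemma setOf_shiftAct_ne_subset (hS : R.IsRightGenSet S) {x₁ x₂ : M → Q} {ρ : ℕ}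
    (h : {m | x₁ m ≠ x₂ m} ⊆ R.ball S R.m0 ρ) (t : M) :
    {m | shiftAct R (R.coord t) x₁ m ≠ shiftAct R (R.coord t) x₂ m} ⊆ R.ball S t ρ := by
  intro m hm
  simpa only [R.act_act_inv] using R.act_coord_mem_ball hS (t := t) (h hm)

lemma domRestrict_mem_restr {X : Set (M → Q)} {x : M → Q} (hx : x ∈ X) (A : Set M) :
    A.domRestrict x ∈ restr A X :=
  ⟨x, hx, rfl⟩

lemma SemiOccurs.of_shiftAct {A : Set M} {p : A → Q} {c : M → Q} {h : G} (hh : h ∈ H)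
    (hocc : SemiOccurs R H p (shiftAct R h c)) : SemiOccurs R H p c := by
  obtain ⟨h', hh', hp⟩ := hocc
  exact ⟨h⁻¹ * h', mul_mem (inv_mem hh) hh', fun a => by
    simpa only [shiftAct, R.mul_act] using hp a⟩

lemma isShiftInvariant_generated (𝔉 : Set (Σ A : Set M, A → Q)) :
    IsShiftInvariant R H (Generated R H 𝔉) :=
  fun _ hh _ hc f hf hocc => hc f hf (hocc.of_shiftAct hh)

lemma isBallDetermined_generated (hS : R.IsRightGenSet S) {𝔉 : Set (Σ A : Set M, A → Q)}
    {κ : ℕ} (hdom : ∀ f ∈ 𝔉, f.1 ⊆ R.ball S R.m0 κ) :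
    IsBallDetermined R S (Generated R H 𝔉) κ := by
  intro w hw f hf ⟨h, hh, hp⟩
  obtain ⟨x, hx, hxw⟩ := hw (R.act h R.m0)
  exact hx f hf ⟨h, hh, fun a =>
    hxw ((R.act_mem_ball_iff hS h).2 (hdom f hf a.2)) ▸ hp a⟩

lemma IsSubshiftFT.isShiftInvariant (hX : IsSubshiftFT R H X) : IsShiftInvariant R H X := by
  obtain ⟨𝔉, -, -, rfl⟩ := hX
  exact isShiftInvariant_generated 𝔉

lemma IsSubshiftFT.exists_isBallDetermined (hS : R.IsRightGenSet S)
    (hX : IsSubshiftFT R H X) : ∃ κ, IsBallDetermined R S X κ := by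
  obtain ⟨𝔉, h𝔉, hdom, rfl⟩ := hX
  obtain ⟨κ, hκ⟩ := R.exists_subset_ball (h𝔉.biUnion hdom) R.m0
  exact ⟨κ, isBallDetermined_generated hS fun f hf => (Set.subset_biUnion_of_mem hf).trans hκ⟩

lemma IsLocalMap.apply_eq_of_eqOn (hS : R.IsRightGenSet S) (hL : IsLocalMap R S H X Y Δ κ)
    {x y : M → Q} (hx : x ∈ X) (hy : y ∈ X) {m : M} (h : Set.EqOn x y (R.ball S m κ)) :
    Δ x m = Δ y m := by
  obtain ⟨-, N, hN, -, δ, -, hδ⟩ := hL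
  rw [hδ x hx m, hδ y hy m]
  congr 1
  funext n
  exact h (R.nAct_mem_ball hS (hN n.2) m)

/-- The element `g₀ = g_{m₀,m'}⁻¹ h⁻¹ g_{m₀,m}` of `G₀ ∩ H`, with `m' = h⁻¹ ▷ m`, carries the
`N`-pattern of `h ⊛ x` at `m` to that of `x` at `m'`; `δ` is invariant under it. -/
lemma IsLocalMap.map_shiftAct (hH : ∀ m : M, R.coord m ∈ H) (hX : IsShiftInvariant R H X)
    (hL : IsLocalMap R S H X Y Δ κ) {x : M → Q} (hx : x ∈ X) {h : G} (hh : h ∈ H) :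
    Δ (shiftAct R h x) = shiftAct R h (Δ x) := by
  obtain ⟨-, N, -, -, δ, hδinv, hδ⟩ := hL
  funext m
  set m' := R.act h⁻¹ m
  set g₀ : G := (R.coord m')⁻¹ * h⁻¹ * R.coord m with hg₀def
  have hg₀ : R.stab g₀ := by
    rw [CellSpace.stab, hg₀def, mul_assoc, R.mul_act, R.mul_act, R.coord_act, R.act_coord_inv]
  have hg₀H : g₀ ∈ H := mul_mem (mul_mem (inv_mem (hH m')) (inv_mem hh)) (hH m)
  rw [hδ _ (hX h hh x hx) m, shiftAct, hδ x hx m']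
  refine hδinv g₀⁻¹ (inv_mem hg₀H) (CellSpace.stab_inv hg₀) _
    ⟨_, hX _ (inv_mem (hH m')) x hx, ?_⟩ _ fun n _ _ => ?_
  · funext n
    rw [CellSpace.nAct_eq]
    exact congrArg x (congrArg (R.act · n) (inv_inv _))
  · simp only [shiftAct, inv_inv, CellSpace.nAct_eq, ← R.mul_act]
    congr 2
    rw [hg₀def]
    group

lemma exists_eqOn_of_pairwiseDisjoint {ι : Type*} {P : Set ι} {B : ι → Set M}
    (hP : P.PairwiseDisjoint B) (u : ι → M → Q) (x : M → Q) :
    ∃ z : M → Q, (∀ t ∈ P, Set.EqOn z (u t) (B t)) ∧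
      ∀ m, (∀ t ∈ P, m ∉ B t) → z m = x m := by
  classical
  refine ⟨fun m => if h : ∃ t ∈ P, m ∈ B t then u h.choose m else x m,
    fun t ht m hm => ?_, fun m hm => dif_neg fun ⟨t, ht, hmt⟩ => hm t ht hmt⟩
  have hex : ∃ t ∈ P, m ∈ B t := ⟨t, ht, hm⟩
  simp only [dif_pos hex]
  rw [hP.elim hex.choose_spec.1 ht (Set.not_disjoint_iff.2 ⟨m, hex.choose_spec.2, hm⟩)]

lemma IsStronglyIrr.exists_eqOn (hSI : IsStronglyIrr R S H X κ)
    {ι : Type*} [DecidableEq ι] {O : Set M} (hO : O.Finite) {z : M → Q} (hz : z ∈ X)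
    {D : ι → Set M} (hD : ∀ i, (D i).Finite) (y : ι → M → Q) {ε : Finset ι}
    (hy : ∀ i ∈ ε, y i ∈ X)
    (hsepO : ∀ i ∈ ε, ∀ a ∈ D i, ∀ b ∈ O, κ + 1 ≤ R.dist S a b)
    (hsep : ∀ i ∈ ε, ∀ j ∈ ε, i ≠ j → ∀ a ∈ D i, ∀ b ∈ D j, κ + 1 ≤ R.dist S a b) :
    ∃ x ∈ X, Set.EqOn x z O ∧ ∀ i ∈ ε, Set.EqOn x (y i) (D i) := by
  induction ε using Finset.induction_on with
  | empty => exact ⟨z, hz, Set.eqOn_refl z O, by simp⟩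
  | @insert i ε hiε ih =>
    simp only [Finset.mem_insert, forall_eq_or_imp] at hy hsepO hsep
    obtain ⟨x', hx', hx'O, hx'D⟩ := ih hy.2 hsepO.2 fun j hj k hk => (hsep.2 j hj).2 k hk
    set B := O ∪ ⋃ j ∈ (ε : Set ι), D j
    have hB : B.Finite := hO.union (ε.finite_toSet.biUnion fun j _ => hD j)
    have hsepB : ∀ a ∈ D i, ∀ b ∈ B, κ + 1 ≤ R.dist S a b := by
      rintro a ha b (hb | hb)
      · exact hsepO.1 a ha b hb
      · obtain ⟨j, hj, hbj⟩ := Set.mem_iUnion₂.1 hb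
        exact hsep.1.2 j hj (fun h => hiε (h ▸ hj)) a ha b hbj
    obtain ⟨x, hx, hxi, hxB⟩ := hSI _ B (hD i) hB ((D i).domRestrict (y i)) (B.domRestrict x')
      ⟨_, hy.1, 1, one_mem H, fun a => by rw [R.one_act]; rfl⟩
      ⟨_, hx', 1, one_mem H, fun a => by rw [R.one_act]; rfl⟩ hsepB
    have hxx' : Set.EqOn x x' B := fun b hb => congrFun hxB ⟨b, hb⟩
    refine ⟨x, hx, fun o ho => (hxx' (Or.inl ho)).trans (hx'O ho), ?_⟩
    simp only [Finset.mem_insert, forall_eq_or_imp]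
    exact ⟨fun a ha => congrFun hxi ⟨a, ha⟩, fun j hj a ha =>
      (hxx' (Or.inr (Set.mem_biUnion hj ha))).trans (hx'D j hj ha)⟩

namespace CellSpace

lemma exists_separated_net (hS : R.IsRightGenSet S) (r : ℕ) :
    ∃ T : Set M, T.Pairwise (fun t t' => r + 1 ≤ R.dist S t t') ∧
      ∀ m : M, ∃ t ∈ T, R.dist S m t ≤ r := by
  obtain ⟨T, hT, hmax⟩ := zorn_subset {T : Set M | T.Pairwise (r + 1 ≤ R.dist S · ·)}
    fun c hc hchain => ⟨⋃₀ c, (Set.pairwise_sUnion hchain.directedOn).2 hc,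
      fun _ => Set.subset_sUnion_of_mem⟩
  refine ⟨T, hT, fun m => ?_⟩
  by_contra! hfar
  have hins : (insert m T).Pairwise (r + 1 ≤ R.dist S · ·) :=
    hT.insert fun t ht _ => ⟨hfar t ht, dist_comm hS m t ▸ hfar t ht⟩
  have hmT : m ∈ T := hmax hins (Set.subset_insert m T) (Set.mem_insert m T)
  simpa only [dist_self, Nat.not_lt_zero] using hfar m hmT

lemma ball_subset_ball_of_inter_nonempty (hS : R.IsRightGenSet S) {m t : M}
    (h : (R.ball S m κ ∩ R.ball S t θ).Nonempty) : R.ball S m κ ⊆ R.ball S t (θ + 2 * κ) := by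
  obtain ⟨w, hwm, hwt⟩ := h
  have hdist : R.dist S t m ≤ θ + κ :=
    (dist_triangle hS t w m).trans (Nat.add_le_add hwt ((mem_ball_comm hS).1 hwm))
  exact (ball_subset_ball hS hdist).trans (ball_mono (by omega))

lemma exists_ball_subset_or_eqOn (hS : R.IsRightGenSet S) {P : Set M} {z x : M → Q}
    (hzx : ∀ m, z m ≠ x m → ∃ t ∈ P, m ∈ R.ball S t θ₀) (hκ : θ₀ + 2 * κ ≤ θ) (m : M) :
    (∃ t ∈ P, R.ball S m κ ⊆ R.ball S t θ) ∨ Set.EqOn z x (R.ball S m κ) := by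
  by_cases h : ∃ t ∈ P, (R.ball S m κ ∩ R.ball S t θ₀).Nonempty
  · obtain ⟨t, ht, hmt⟩ := h
    exact Or.inl ⟨t, ht, (ball_subset_ball_of_inter_nonempty hS hmt).trans (ball_mono hκ)⟩
  · refine Or.inr fun w hw => by_contra fun hzw => ?_
    obtain ⟨t, ht, hwt⟩ := hzx w hzw
    exact h ⟨t, ht, w, hw, hwt⟩

lemma clos_biUnion_ball_subset (hS : R.IsRightGenSet S) (ε : Set M) (θ κ : ℕ) :
    R.clos S (⋃ t ∈ ε, R.ball S t θ) κ ⊆ ⋃ t ∈ ε, R.ball S t (θ + κ) := by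
  rintro m ⟨a, ham, ha⟩
  obtain ⟨t, ht, hat⟩ := Set.mem_iUnion₂.1 ha
  exact Set.mem_biUnion ht (ball_subset_ball hS hat ((mem_ball_comm hS).1 ham))

end CellSpace

lemma exists_isTiling (hS : R.IsRightGenSet S) (θ κ : ℕ) :
    ∃ T, IsTiling R S θ κ (2 * θ + κ) T := by
  obtain ⟨T, hsep, hcov⟩ := R.exists_separated_net hS (2 * θ + κ)
  refine ⟨T, fun t ht t' ht' hne a ha b hb => ?_, fun m => ?_⟩
  · have h₁ := hsep ht ht' hne
    have h₂ := R.dist_triangle hS t a t'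
    have h₃ := R.dist_triangle hS a b t'
    rw [CellSpace.mem_ball] at ha hb
    rw [R.dist_comm hS b t'] at h₃
    omega
  · obtain ⟨t, ht, hmt⟩ := hcov m
    exact ⟨t, ht, (R.mem_ball_comm hS).2 hmt⟩

lemma IsTiling.pairwiseDisjoint (hT : IsTiling R S θ κ θ' T) :
    T.PairwiseDisjoint fun t => R.ball S t θ := by
  intro t ht t' ht' hne
  refine Set.disjoint_left.2 fun a ha ha' => ?_
  simpa only [CellSpace.dist_self, Nat.add_one_le_iff, Nat.not_lt_zero] using
    hT.1 t ht t' ht' hne a ha a ha'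

lemma IsTiling.disjoint_clos (hT : IsTiling R S θ κ θ' T) {ε : Set M} (hε : ε ⊆ T)
    {t : M} (ht : t ∈ T) (htε : t ∉ ε) :
    Disjoint (R.ball S t θ) (R.clos S (⋃ t' ∈ ε, R.ball S t' θ) κ) := by
  refine Set.disjoint_left.2 fun m hm ⟨a, ham, ha⟩ => ?_
  obtain ⟨t', ht', hat'⟩ := Set.mem_iUnion₂.1 ha
  have := hT.1 t ht t' (hε ht') (fun h => htε (h ▸ ht')) m hm a hat'
  exact absurd ham (by rw [CellSpace.mem_ball]; omega)

lemma IsTiling.ncard_le (hS : R.IsRightGenSet S) (hT : IsTiling R S θ κ θ' T)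
    (hF : F.Finite) :
    F.ncard ≤ {t ∈ T | R.ball S t θ ⊆ F}.ncard * (R.ball S R.m0 θ').ncard +
      (R.bdry S F (θ + θ')).ncard := by
  have hTF : {t ∈ T | R.ball S t θ ⊆ F}.Finite :=
    hF.subset fun t ht => ht.2 (R.mem_ball_self t θ)
  have hinter : R.inter S F (θ + θ') ⊆ ⋃ t ∈ hTF.toFinset, R.ball S t θ' := by
    intro m hm
    obtain ⟨t, ht, hmt⟩ := hT.2 m
    refine Set.mem_biUnion (hTF.mem_toFinset.2 ⟨ht, ?_⟩) hmt
    rw [add_comm] at hm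
    exact (R.ball_subset_ball hS ((R.mem_ball_comm hS).1 hmt)).trans hm.2
  have hcover : F ⊆ R.inter S F (θ + θ') ∪ R.bdry S F (θ + θ') := fun m hm =>
    or_iff_not_imp_left.2 fun hnot => ⟨R.subset_clos F _ hm, hnot⟩
  calc F.ncard
      ≤ (R.inter S F (θ + θ')).ncard + (R.bdry S F (θ + θ')).ncard :=
        (Set.ncard_le_ncard hcover ((hF.subset fun _ h => h.1).union
          ((R.finite_clos hS hF _).subset Set.sdiff_subset))).trans (Set.ncard_union_le _ _)
    _ ≤ (⋃ t ∈ hTF.toFinset, R.ball S t θ').ncard + (R.bdry S F (θ + θ')).ncard :=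
        Nat.add_le_add_right (Set.ncard_le_ncard hinter
          (hTF.toFinset.finite_toSet.biUnion fun t _ => R.finite_ball hS t θ')) _
    _ ≤ _ := by
        gcongr
        refine (hTF.toFinset.set_ncard_biUnion_le _).trans ?_
        rw [Finset.sum_congr rfl fun t _ => R.ncard_ball hS t θ', Finset.sum_const,
          smul_eq_mul, Set.ncard_eq_toFinset_card _ hTF]

/-- Where `x` shows the pattern of `y₁ t` on `B(t, θ)`, replace it by `y₂ t`. Since `y₁ t` and
`y₂ t` differ only deep inside `B(t, θ)`, every window of radius `κX` or `κΔ` of the result sees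
either `x` or a single `y₂ t` next to the matching `y₁ t`, which keeps it in `X` and
preserves its image under `Δ`. -/
lemma exists_avoiding_map_eq (hS : R.IsRightGenSet S) (hXdet : IsBallDetermined R S X κX)
    (hL : IsLocalMap R S H X Y Δ κΔ) (hT : T.PairwiseDisjoint fun t => R.ball S t θ)
    (hθX : θ₀ + 2 * κX ≤ θ) (hθΔ : θ₀ + 2 * κΔ ≤ θ) {y₁ y₂ : M → M → Q}
    (hy₁ : ∀ t ∈ T, y₁ t ∈ X) (hy₂ : ∀ t ∈ T, y₂ t ∈ X)
    (hΔy : ∀ t ∈ T, Δ (y₁ t) = Δ (y₂ t)) (hne : ∀ t ∈ T, y₁ t ≠ y₂ t)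
    (hdiff : ∀ t ∈ T, {m | y₁ t m ≠ y₂ t m} ⊆ R.ball S t θ₀) {x : M → Q} (hx : x ∈ X) :
    ∃ z ∈ X, Δ z = Δ x ∧ ∀ t ∈ T, ¬ Set.EqOn z (y₁ t) (R.ball S t θ) := by
  set P := {t ∈ T | Set.EqOn x (y₁ t) (R.ball S t θ)}
  obtain ⟨z, hzP, hzx⟩ := exists_eqOn_of_pairwiseDisjoint (hT.subset (Set.sep_subset _ _)) y₂ x
  have hzx' : ∀ m, z m ≠ x m → ∃ t ∈ P, m ∈ R.ball S t θ₀ := by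
    intro m hm
    by_cases hex : ∃ t ∈ P, m ∈ R.ball S t θ
    · obtain ⟨t, ht, hmt⟩ := hex
      refine ⟨t, ht, hdiff t ht.1 ?_⟩
      show y₁ t m ≠ y₂ t m
      rwa [← ht.2 hmt, ← hzP t ht hmt, ne_comm]
    · exact absurd (hzx m fun t ht hmt => hex ⟨t, ht, hmt⟩) hm
  have hwindow : ∀ κ, θ₀ + 2 * κ ≤ θ → ∀ m,
      (∃ t ∈ P, R.ball S m κ ⊆ R.ball S t θ) ∨ Set.EqOn z x (R.ball S m κ) :=
    fun κ hκ m => R.exists_ball_subset_or_eqOn hS hzx' hκ m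
  have hzX : z ∈ X := by
    refine hXdet z fun m => ?_
    rcases hwindow κX hθX m with ⟨t, ht, hsub⟩ | h
    · exact ⟨y₂ t, hy₂ t ht.1, (hzP t ht).mono hsub⟩
    · exact ⟨x, hx, h⟩
  refine ⟨z, hzX, funext fun m => ?_, fun t ht hzt => ?_⟩
  · rcases hwindow κΔ hθΔ m with ⟨t, ht, hsub⟩ | h
    · rw [hL.apply_eq_of_eqOn hS hzX (hy₂ t ht.1) ((hzP t ht).mono hsub), ← hΔy t ht.1,
        hL.apply_eq_of_eqOn hS (hy₁ t ht.1) hx (ht.2.mono hsub).symm]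
    · exact hL.apply_eq_of_eqOn hS hzX hx h
  · by_cases htP : t ∈ P
    · refine hne t ht (funext fun m => by_contra fun hm => hm ?_)
      have hm' := R.ball_mono (show θ₀ ≤ θ by omega) (hdiff t ht hm)
      exact (hzt hm').symm.trans (hzP t htP hm')
    · refine htP ⟨ht, fun m hm => (by_contra fun hzm => ?_ : z m = x m) ▸ hzt hm⟩
      obtain ⟨t', ht', hmt'⟩ := hzx' m hzm
      exact Set.disjoint_left.1 (hT ht ht'.1 fun h => htP (h ▸ ht')) hm
        (R.ball_mono (show θ₀ ≤ θ by omega) hmt')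

lemma image_eq_image_avoiding_translates (hS : R.IsRightGenSet S)
    (hH : ∀ m : M, R.coord m ∈ H) (hXinv : IsShiftInvariant R H X)
    (hXdet : IsBallDetermined R S X κX) (hL : IsLocalMap R S H X Y Δ κΔ)
    (hT : T.PairwiseDisjoint fun t => R.ball S t θ)
    (hθX : θ₀ + 2 * κX ≤ θ) (hθΔ : θ₀ + 2 * κΔ ≤ θ) {x₁ x₂ : M → Q} (hx₁ : x₁ ∈ X)
    (hx₂ : x₂ ∈ X) (hΔx : Δ x₁ = Δ x₂) (hne : x₁ ≠ x₂)
    (hdiff : {m | x₁ m ≠ x₂ m} ⊆ R.ball S R.m0 θ₀) :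
    Δ '' X =
      Δ '' {z ∈ X | ∀ t ∈ T, ¬ Set.EqOn z (shiftAct R (R.coord t) x₁) (R.ball S t θ)} := by
  refine subset_antisymm ?_ (Set.image_mono (Set.sep_subset X _))
  rintro _ ⟨x, hx, rfl⟩
  obtain ⟨z, hz, hΔz, hzT⟩ := exists_avoiding_map_eq hS hXdet hL hT hθX hθΔ
    (fun t _ => hXinv _ (hH t) _ hx₁) (fun t _ => hXinv _ (hH t) _ hx₂)
    (fun t _ => by rw [hL.map_shiftAct hH hXinv hx₁ (hH t), hL.map_shiftAct hH hXinv hx₂ (hH t),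
      hΔx])
    (fun _ _ => shiftAct_ne_shiftAct hne _) (fun t _ => setOf_shiftAct_ne_subset hS hdiff t) hx
  exact ⟨z, ⟨hz, hzT⟩, hΔz⟩

lemma ncard_le_ncard_image_mul_pow {D β : Type*} [Finite D] [Finite Q] {A : Set (D → Q)}
    (Φ : (D → Q) → β) (U : Set D)
    (hΦ : ∀ w ∈ A, ∀ w' ∈ A, Φ w = Φ w' → Set.EqOn w w' U → w = w') :
    A.ncard ≤ (Φ '' A).ncard * Nat.card Q ^ U.ncard := by
  have hle := Set.ncard_le_ncard_of_injOn (fun w => (Φ w, U.domRestrict w))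
    (t := (Φ '' A) ×ˢ Set.univ) (fun w hw => ⟨Set.mem_image_of_mem Φ hw, Set.mem_univ _⟩)
    (fun w hw w' hw' h => hΦ w hw w' hw' (congrArg Prod.fst h) fun u hu =>
      congrFun (congrArg Prod.snd h) ⟨u, hu⟩)
    (((Set.toFinite A).image Φ).prod (Set.toFinite _))
  rwa [Set.ncard_prod, Set.ncard_univ, Nat.card_fun, Nat.card_coe_set_eq] at hle

lemma sum_ncard_div_pow_le {D ι : Type*} [Finite D] [Finite Q] [Nonempty Q] {s : Finset ι}
    {A B : Set (D → Q)} {Φ : ι → (D → Q) → (D → Q)} {U : ι → Set D}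
    (hmaps : ∀ i ∈ s, Set.MapsTo (Φ i) A B)
    (hdisj : (s : Set ι).PairwiseDisjoint fun i => Φ i '' A)
    (hΦ : ∀ i ∈ s, ∀ w ∈ A, ∀ a ∉ U i, Φ i w a = w a) :
    ∑ i ∈ s, (A.ncard : ℝ) / (Nat.card Q : ℝ) ^ (U i).ncard ≤ B.ncard := by
  calc ∑ i ∈ s, (A.ncard : ℝ) / (Nat.card Q : ℝ) ^ (U i).ncard
      ≤ ∑ i ∈ s, ((Φ i '' A).ncard : ℝ) := by
        refine Finset.sum_le_sum fun i hi =>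
          (div_le_iff₀ (pow_pos (Nat.cast_pos.2 Nat.card_pos) _)).2 ?_
        refine mod_cast ncard_le_ncard_image_mul_pow (Φ i) (U i)
          fun w hw w' hw' h hU => funext fun a => ?_
        by_cases ha : a ∈ U i
        · exact hU ha
        · rw [← hΦ i hi w hw a ha, ← hΦ i hi w' hw' a ha, h]
    _ = ((⋃ i ∈ (s : Set ι), Φ i '' A).ncard : ℝ) := by
        rw [s.finite_toSet.ncard_biUnion (fun _ _ => Set.toFinite _) hdisj,
          finsum_mem_coe_finset, Nat.cast_sum]
    _ ≤ B.ncard := Nat.cast_le.2 (Set.ncard_le_ncard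
        (Set.iUnion₂_subset fun i hi => (hmaps i hi).image_subset) (Set.toFinite _))

lemma sum_powerset_div_pow {ι : Type*} (s : Finset ι) (a C : ℝ) :
    ∑ t ∈ s.powerset, a / C ^ t.card = a * (1 + C⁻¹) ^ s.card := by
  rw [add_comm, ← Finset.sum_pow_mul_eq_add_pow, Finset.mul_sum]
  simp only [one_pow, mul_one, inv_pow, div_eq_mul_inv]

lemma restr_eq_image_restr {X : Set (M → Q)} {A B : Set M} (hBA : B ⊆ A) :
    restr B X = (fun (w : A → Q) (b : B) => w ⟨b, hBA b.2⟩) '' restr A X := by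
  rw [restr, restr, Set.image_image]
  rfl

lemma ncard_restr_le_mul [Finite Q] {X : Set (M → Q)} {A B : Set M} (hBA : B ⊆ A)
    (hA : A.Finite) : (restr A X).ncard ≤ (restr B X).ncard * Nat.card Q ^ (A \ B).ncard := by
  have := hA.to_subtype
  have hU : (Subtype.val ⁻¹' (A \ B) : Set A).ncard = (A \ B).ncard :=
    Set.ncard_preimage_of_injective_subset_range Subtype.val_injective
      (by rw [Subtype.range_coe]; exact Set.sdiff_subset)
  rw [restr_eq_image_restr hBA, ← hU]
  refine ncard_le_ncard_image_mul_pow _ _ fun w _ w' _ h hU => funext fun a => ?_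
  by_cases ha : a.1 ∈ B
  · exact congrFun h ⟨a, ha⟩
  · exact hU ⟨a.2, ha⟩

lemma IsLocalMap.ncard_restr_image_le [Finite Q] [Nonempty Q] (hS : R.IsRightGenSet S)
    (hL : IsLocalMap R S H X Y Δ κ) (hZX : Z ⊆ X) (hF : F.Finite) :
    (restr F (Δ '' Z)).ncard ≤ (restr F Z).ncard * Nat.card Q ^ (R.bdry S F κ).ncard := by
  obtain ⟨-, N, hN, -, δ, -, hδ⟩ := hL
  have hclos := R.finite_clos hS hF κ
  have := hclos.to_subtype
  have hmem : ∀ m ∈ F, ∀ n : N, R.nAct m n ∈ R.clos S F κ := fun m hm n =>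
    ⟨m, (R.mem_ball_comm hS).1 (R.nAct_mem_ball hS (hN n.2) m), hm⟩
  have himage : restr F (Δ '' Z) ⊆
      (fun w (a : F) => δ fun n => w ⟨R.nAct a n, hmem a a.2 n⟩) '' restr (R.clos S F κ) Z := by
    rintro _ ⟨_, ⟨z, hz, rfl⟩, rfl⟩
    exact ⟨_, domRestrict_mem_restr hz _, funext fun a => (hδ z (hZX hz) a).symm⟩
  have hext : R.clos S F κ \ F ⊆ R.bdry S F κ := fun m hm => ⟨hm.1, fun h => hm.2 h.1⟩
  calc (restr F (Δ '' Z)).ncard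
      ≤ (restr (R.clos S F κ) Z).ncard :=
        (Set.ncard_le_ncard himage ((Set.toFinite _).image _)).trans
          (Set.ncard_image_le (Set.toFinite _))
    _ ≤ (restr F Z).ncard * Nat.card Q ^ (R.clos S F κ \ F).ncard :=
        ncard_restr_le_mul (R.subset_clos F κ) hclos
    _ ≤ (restr F Z).ncard * Nat.card Q ^ (R.bdry S F κ).ncard :=
        Nat.mul_le_mul_left _ (Nat.pow_le_pow_right Nat.card_pos
          (Set.ncard_le_ncard hext (hclos.subset Set.sdiff_subset)))

lemma ncard_clos_biUnion_ball_le (hS : R.IsRightGenSet S) (ε : Finset M) (θ κ : ℕ) :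
    (R.clos S (⋃ t ∈ (ε : Set M), R.ball S t θ) κ).ncard ≤
      ε.card * (R.ball S R.m0 (θ + κ)).ncard := by
  have hsub := R.clos_biUnion_ball_subset hS ε θ κ
  simp only [Finset.mem_coe] at hsub
  refine (Set.ncard_le_ncard hsub (ε.finite_toSet.biUnion fun t _ => R.finite_ball hS t _)).trans
    ((ε.set_ncard_biUnion_le _).trans_eq ?_)
  rw [Finset.sum_congr rfl fun t _ => R.ncard_ball hS t _, Finset.sum_const, smul_eq_mul]

lemma IsTiling.exists_eqOn (hS : R.IsRightGenSet S) (hSI : IsStronglyIrr R S H X κ)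
    (hT : IsTiling R S θ κ θ' T) {y : M → M → Q} (hy : ∀ t ∈ T, y t ∈ X) (hF : F.Finite)
    {ε : Finset M} (hε : (ε : Set M) ⊆ T) {z : M → Q} (hz : z ∈ X) :
    ∃ x ∈ X, Set.EqOn x z (F \ R.clos S (⋃ t ∈ (ε : Set M), R.ball S t θ) κ) ∧
      ∀ t ∈ ε, Set.EqOn x (y t) (R.ball S t θ) := by
  classical
  refine hSI.exists_eqOn hF.sdiff hz (fun t => R.finite_ball hS t θ) y
    (fun t ht => hy t (hε ht)) (fun t ht a ha b hb => ?_)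
    (fun t ht t' ht' hne => hT.1 t (hε ht) t' (hε ht') hne)
  by_contra! hab
  exact hb.2 ⟨a, (R.mem_ball_comm hS).1 (Nat.lt_succ_iff.1 hab), Set.mem_biUnion ht ha⟩

lemma IsTiling.exists_restr_eqOn_iff (hS : R.IsRightGenSet S) (hSI : IsStronglyIrr R S H X κ)
    (hT : IsTiling R S θ κ θ' T) {y : M → M → Q} (hy : ∀ t ∈ T, y t ∈ X) (hZX : Z ⊆ X)
    (hZ : ∀ z ∈ Z, ∀ t ∈ T, ¬ Set.EqOn z (y t) (R.ball S t θ)) (hF : F.Finite)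
    {ε : Finset M} (hε : (ε : Set M) ⊆ T) {w : F → Q} (hw : w ∈ restr F Z) :
    ∃ u ∈ restr F X, (∀ t ∈ T, R.ball S t θ ⊆ F →
        ((∀ a : F, a.1 ∈ R.ball S t θ → u a = y t a) ↔ t ∈ ε)) ∧
      ∀ a : F, a.1 ∉ R.clos S (⋃ t ∈ (ε : Set M), R.ball S t θ) κ → u a = w a := by
  obtain ⟨z, hz, rfl⟩ := hw
  obtain ⟨x, hx, hxz, hxy⟩ := hT.exists_eqOn hS hSI hy hF hε (hZX hz)
  refine ⟨F.domRestrict x, domRestrict_mem_restr hx F, fun t ht htF => ⟨fun hmatch => ?_,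
    fun htε a ha => hxy t htε ha⟩, fun a ha => hxz ⟨a.2, ha⟩⟩
  refine by_contra fun htε => hZ z hz t ht fun m hm => ?_
  have hmU := Set.disjoint_left.1 (hT.disjoint_clos hε ht htε) hm
  exact (hxz ⟨htF hm, hmU⟩).symm.trans (hmatch ⟨m, htF hm⟩ hm)

/-- Imposing `y` on the tiles of each `ε ⊆ T_F` gives pairwise disjoint copies of `Z_F` inside
`X_F`, each smaller than `Z_F` by a factor of at most `q^{|ε| V}`. -/
lemma IsTiling.ncard_restr_mul_le [Finite Q] [Nonempty Q] (hS : R.IsRightGenSet S)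
    (hSI : IsStronglyIrr R S H X κ) (hT : IsTiling R S θ κ θ' T) {y : M → M → Q}
    (hy : ∀ t ∈ T, y t ∈ X) (hZX : Z ⊆ X)
    (hZ : ∀ z ∈ Z, ∀ t ∈ T, ¬ Set.EqOn z (y t) (R.ball S t θ)) (hF : F.Finite) :
    ((restr F Z).ncard : ℝ) *
        (1 + ((Nat.card Q : ℝ) ^ (R.ball S R.m0 (θ + κ)).ncard)⁻¹) ^
          {t ∈ T | R.ball S t θ ⊆ F}.ncard ≤ (restr F X).ncard := by
  classical
  have := hF.to_subtype
  have hTF : {t ∈ T | R.ball S t θ ⊆ F}.Finite :=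
    hF.subset fun t ht => ht.2 (R.mem_ball_self t θ)
  set U : Finset M → Set F := fun ε =>
    Subtype.val ⁻¹' R.clos S (⋃ t ∈ (ε : Set M), R.ball S t θ) κ
  have hmod : ∀ ε ∈ hTF.toFinset.powerset, ∀ w ∈ restr F Z, ∃ u ∈ restr F X,
      (∀ t ∈ hTF.toFinset, (∀ a : F, a.1 ∈ R.ball S t θ → u a = y t a) ↔ t ∈ ε) ∧
      ∀ a ∉ U ε, u a = w a := by
    intro ε hε w hw
    obtain ⟨u, hu, hmatch, hUw⟩ := hT.exists_restr_eqOn_iff hS hSI hy hZX hZ hF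
      (fun t ht => (hTF.mem_toFinset.1 (Finset.mem_powerset.1 hε ht)).1) hw
    exact ⟨u, hu, fun t ht => hmatch t (hTF.mem_toFinset.1 ht).1 (hTF.mem_toFinset.1 ht).2, hUw⟩
  choose! Φ hΦX hΦmatch hΦeq using hmod
  have hdisj : (hTF.toFinset.powerset : Set (Finset M)).PairwiseDisjoint
      fun ε => Φ ε '' restr F Z := by
    refine fun ε hε ε' hε' hne => Set.disjoint_left.2 ?_
    rintro _ ⟨w, hw, rfl⟩ ⟨w', hw', h⟩
    refine hne (Finset.ext fun t => ?_)
    by_cases ht : t ∈ hTF.toFinset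
    · rw [← hΦmatch ε hε w hw t ht, ← hΦmatch ε' hε' w' hw' t ht, h]
    · exact iff_of_false (fun h => ht (Finset.mem_powerset.1 hε h))
        (fun h => ht (Finset.mem_powerset.1 hε' h))
  have hU : ∀ ε, (U ε).ncard ≤ (R.ball S R.m0 (θ + κ)).ncard * ε.card := fun ε =>
    (Set.ncard_le_ncard_of_injOn Subtype.val (fun _ ha => ha) Subtype.val_injective.injOn
      (R.finite_clos hS (ε.finite_toSet.biUnion fun t _ => R.finite_ball hS t θ) κ)).trans
      ((ncard_clos_biUnion_ball_le hS ε θ κ).trans_eq (mul_comm _ _))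
  rw [Set.ncard_eq_toFinset_card _ hTF, ← sum_powerset_div_pow]
  refine (Finset.sum_le_sum fun ε _ => ?_).trans
    (sum_ncard_div_pow_le (U := U) hΦX hdisj hΦeq)
  have hq : (1 : ℝ) ≤ Nat.card Q := by exact_mod_cast Nat.card_pos
  rw [← pow_mul]
  exact div_le_div_of_nonneg_left (Nat.cast_nonneg _) (pow_pos (by linarith) _)
    (pow_le_pow_right₀ hq (hU ε))

lemma IsTiling.ncard_restr_image_mul_le [Finite Q] [Nonempty Q] (hS : R.IsRightGenSet S)
    (hSI : IsStronglyIrr R S H X κ) (hT : IsTiling R S θ κ θ' T)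
    (hL : IsLocalMap R S H X Y Δ κΔ) {y : M → M → Q} (hy : ∀ t ∈ T, y t ∈ X) (hZX : Z ⊆ X)
    (hZ : ∀ z ∈ Z, ∀ t ∈ T, ¬ Set.EqOn z (y t) (R.ball S t θ)) (hF : F.Finite) :
    ((restr F (Δ '' Z)).ncard : ℝ) *
        (1 + ((Nat.card Q : ℝ) ^ (R.ball S R.m0 (θ + κ)).ncard)⁻¹) ^
          {t ∈ T | R.ball S t θ ⊆ F}.ncard ≤
      (restr F X).ncard * (Nat.card Q : ℝ) ^ (R.bdry S F κΔ).ncard := by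
  calc _ ≤ (restr F Z).ncard * (Nat.card Q : ℝ) ^ (R.bdry S F κΔ).ncard *
        (1 + ((Nat.card Q : ℝ) ^ (R.ball S R.m0 (θ + κ)).ncard)⁻¹) ^
          {t ∈ T | R.ball S t θ ⊆ F}.ncard := by
        gcongr
        exact_mod_cast hL.ncard_restr_image_le hS hZX hF
    _ ≤ _ := by
        rw [mul_right_comm]
        gcongr
        exact hT.ncard_restr_mul_le hS hSI hy hZX hZ hF

lemma log_div_le_of_mul_pow_le {a b n V e₁ r q : ℝ} {k e₂ : ℕ} (ha : 1 ≤ a) (hn : 0 < n)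
    (hV : 0 < V) (hr : 1 ≤ r) (hq : 1 ≤ q) (hcount : a * r ^ k ≤ b * q ^ e₂)
    (hcover : n ≤ k * V + e₁) :
    Real.log a / n ≤
      Real.log b / n - Real.log r / V + (Real.log r / V * (e₁ / n) + Real.log q * (e₂ / n)) := by
  have hb : 0 < b := pos_of_mul_pos_left ((by positivity : 0 < a * r ^ k).trans_le hcount)
    (by positivity)
  have hlog : Real.log a + k * Real.log r ≤ Real.log b + e₂ * Real.log q := by
    have := Real.log_le_log (by positivity) hcount
    rwa [Real.log_mul (by positivity) (by positivity), Real.log_pow,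
      Real.log_mul hb.ne' (by positivity), Real.log_pow] at this
  have hk : (n - e₁) / V * Real.log r ≤ k * Real.log r :=
    mul_le_mul_of_nonneg_right ((div_le_iff₀ hV).2 (by linarith)) (Real.log_nonneg hr)
  have hrhs : (Real.log b / n - Real.log r / V +
      (Real.log r / V * (e₁ / n) + Real.log q * (e₂ / n))) * n =
      Real.log b + e₂ * Real.log q - (n - e₁) / V * Real.log r := by
    field_simp
    ring
  rw [div_le_iff₀ hn, hrhs]
  linarith

lemma limsup_lt_limsup_of_le_sub_add {I : Type*} [Nonempty I] [SemilatticeSup I]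
    {f g e : I → ℝ} {c B : ℝ} (hc : 0 < c) (hfg : ∀ i, f i ≤ g i - c + e i)
    (he : Tendsto e atTop (nhds 0)) (hf : ∀ i, 0 ≤ f i) (hg : ∀ i, g i ≤ B) :
    limsup f atTop < limsup g atTop := by
  have hg' : ∀ᶠ i in atTop, g i < limsup g atTop + c / 4 :=
    eventually_lt_of_limsup_lt (by linarith) (isBoundedUnder_of ⟨B, hg⟩)
  have hf' : ∀ᶠ i in atTop, f i ≤ limsup g atTop - c / 4 := by
    filter_upwards [hg', he.eventually (gt_mem_nhds (half_pos hc))] with i hgi hei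
    linarith [hfg i]
  have := limsup_le_of_le (isBoundedUnder_of ⟨0, hf⟩).isCoboundedUnder_le hf'
  linarith

lemma ncard_restr_le_pow [Finite Q] (X : Set (M → Q)) {E : Set M} (hE : E.Finite) :
    (restr E X).ncard ≤ Nat.card Q ^ E.ncard := by
  have := hE.to_subtype
  calc (restr E X).ncard ≤ (Set.univ : Set (E → Q)).ncard :=
        Set.ncard_le_ncard (Set.subset_univ _)
    _ = Nat.card Q ^ E.ncard := by rw [Set.ncard_univ, Nat.card_fun, Nat.card_coe_set_eq]

lemma log_ncard_restr_div_le [Finite Q] [Nonempty Q] (X : Set (M → Q)) {E : Set M}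
    (hE : E.Finite) (hEpos : 0 < E.ncard) :
    Real.log (restr E X).ncard / E.ncard ≤ Real.log (Nat.card Q) := by
  rw [div_le_iff₀ (by exact_mod_cast hEpos), mul_comm, ← Real.log_pow]
  rcases Nat.eq_zero_or_pos (restr E X).ncard with h | h
  · rw [h, Nat.cast_zero, Real.log_zero]
    exact Real.log_nonneg (one_le_pow₀ (by exact_mod_cast Nat.card_pos))
  · exact Real.log_le_log (by exact_mod_cast h) (by exact_mod_cast ncard_restr_le_pow X hE)

/-- Along a Følner net the boundary terms are negligible and `k E ≥ |E| / V` up to them, so the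
entropy gap is at least `log r / V`. -/
lemma entropy_lt_entropy_of_ncard_restr_le {I : Type*} [Nonempty I] [SemilatticeSup I]
    [Finite Q] {F : I → Set M} (hF : IsFolnerNet R S F) {A X : Set (M → Q)} (hA : A.Nonempty)
    {r : ℝ} (hr : 1 < r) {V ρ₁ ρ₂ : ℕ} (hV : 0 < V) (k : Set M → ℕ)
    (hcount : ∀ E : Set M, E.Finite → ((restr E A).ncard : ℝ) * r ^ k E ≤
      (restr E X).ncard * (Nat.card Q : ℝ) ^ (R.bdry S E ρ₂).ncard)
    (hcover : ∀ E : Set M, E.Finite → E.ncard ≤ k E * V + (R.bdry S E ρ₁).ncard) :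
    entropy R S F A < entropy R S F X := by
  obtain ⟨hne, hfin, hlim⟩ := hF
  obtain ⟨a₀, ha₀⟩ := hA
  have : Nonempty Q := ⟨a₀ R.m0⟩
  have hpos : ∀ i, 0 < (F i).ncard := fun i => (Set.ncard_pos (hfin i)).2 (hne i)
  have ha : ∀ i, (1 : ℝ) ≤ (restr (F i) A).ncard := fun i => by
    have := (hfin i).to_subtype
    exact_mod_cast (Set.ncard_pos (Set.toFinite _)).2 ⟨_, domRestrict_mem_restr ha₀ _⟩
  have he := ((hlim ρ₁).const_mul (Real.log r / V)).add ((hlim ρ₂).const_mul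
    (Real.log (Nat.card Q)))
  rw [mul_zero, mul_zero, add_zero] at he
  exact limsup_lt_limsup_of_le_sub_add (div_pos (Real.log_pos hr) (by exact_mod_cast hV))
    (fun i => log_div_le_of_mul_pow_le (ha i) (by exact_mod_cast hpos i)
      (by exact_mod_cast hV) hr.le (by exact_mod_cast Nat.card_pos) (hcount _ (hfin i))
      (by exact_mod_cast hcover _ (hfin i)))
    he (fun i => div_nonneg (Real.log_nonneg (ha i)) (Nat.cast_nonneg _))
    (fun i => log_ncard_restr_div_le X (hfin i) (hpos i))

end Development

theorem stmt17_general {I : Type*} [Nonempty I] [SemilatticeSup I]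
    [Finite Q] (R : CellSpace G M) (S : Set G) (hS : R.IsRightGenSet S)
    (H : Subgroup G) (hH : ∀ m : M, R.coord m ∈ H)
    (F : I → Set M) (hF : IsFolnerNet R S F)
    (X : Set (M → Q)) (hX : IsSubshiftFT R H X)
    (hXsi : ∃ κ : ℕ, IsStronglyIrr R S H X κ)
    (Y : Set (M → Q))
    (Δ : (M → Q) → (M → Q)) (hΔ : ∃ κ : ℕ, IsLocalMap R S H X Y Δ κ)
    (hpi : ¬ PreInjective X Δ) :
    entropy R S F (Δ '' X) < entropy R S F X := by
  obtain ⟨κΔ, hL⟩ := hΔ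
  obtain ⟨κ, hSI⟩ := hXsi
  obtain ⟨κX, hXdet⟩ := hX.exists_isBallDetermined hS
  simp only [PreInjective, not_forall] at hpi
  obtain ⟨x₁, hx₁, x₂, hx₂, hΔx, hfin, hne⟩ := hpi
  obtain ⟨θ₀, hθ₀⟩ := R.exists_subset_ball hfin R.m0
  have : Nonempty Q := ⟨x₁ R.m0⟩
  set θ := θ₀ + 2 * (κX + κΔ)
  obtain ⟨T, hT⟩ := exists_isTiling hS θ κ
  have hΔZ := image_eq_image_avoiding_translates hS hH hX.isShiftInvariant hXdet hL
    hT.pairwiseDisjoint (by omega) (by omega) hx₁ hx₂ hΔx hne hθ₀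
  rw [hΔZ]
  exact entropy_lt_entropy_of_ncard_restr_le hF (hΔZ ▸ ⟨_, Set.mem_image_of_mem Δ hx₁⟩)
    (lt_add_of_pos_right 1 (inv_pos.2 (pow_pos (Nat.cast_pos.2 Nat.card_pos) _)))
    (R.ncard_ball_pos hS R.m0 (2 * θ + κ)) _
    (fun E hE => hT.ncard_restr_image_mul_le hS hSI hL
      (fun t _ => hX.isShiftInvariant _ (hH t) _ hx₁) (Set.sep_subset X _) (fun z hz => hz.2) hE)
    (fun E hE => hT.ncard_le hS hE)

theorem stmt17 {I : Type*} [Nonempty I] [SemilatticeSup I]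
    [Finite Q] (R : CellSpace G M) (S : Set G) (hS : R.IsRightGenSet S)
    (H : Subgroup G) (hH : ∀ m : M, R.coord m ∈ H)
    (hM : Infinite M)
    (hAm : RightAmenable R) (F : I → Set M) (hF : IsFolnerNet R S F)
    (X : Set (M → Q)) (hX : IsSubshiftFT R H X)
    (hXsi : ∃ κ : ℕ, IsStronglyIrr R S H X κ)
    (Y : Set (M → Q)) (hY : IsSubshift R H Y)
    (Δ : (M → Q) → (M → Q)) (hΔ : ∃ κ : ℕ, IsLocalMap R S H X Y Δ κ)
    (hpi : ¬ PreInjective X Δ) :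
    entropy R S F (Δ '' X) < entropy R S F X :=
  stmt17_general R S hS H hH F hF X hX hXsi Y Δ hΔ hpi

end GoE
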